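/- Let σ be an assemblage with steering robustness S_R(σ) and let σ̃ be an assemblage achieving it, i.e. such that σ^{US} := (1/(1 + S_R(σ))) σ + (S_R(σ)/(1 + S_R(σ))) σ̃ is unsteerable. Then S_R(σ) · S_O(σ̃) − 2 ≤ S_O(σ) ≤ S_R(σ) · [S_O(σ̃) + 2], where S_O denotes the optimal steering fraction. -/

import Mathlib

open scoped ComplexOrder Kronecker Matrix
open MeasureTheory

noncomputable section

namespace QSteer

/-- Square complex matrices indexed by `ι` (the Hilbert space `ℂ^ι`). -/
abbrev HMat (ι : Type) : Type := Matrix ι ι ℂ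

/-- A density matrix: positive semidefinite with unit trace. -/
def IsDensity {ι : Type} [Fintype ι] (ρ : HMat ι) : Prop :=
  ρ.PosSemidef ∧ ρ.trace = 1

/-- A POVM family `{E_{a|x}}`: positive semidefinite effects summing to the identity
for every setting `x`. -/
def IsPOVM {ι A X : Type} [Fintype ι] [Fintype A] [DecidableEq ι]
    (E : A → X → HMat ι) : Prop :=
  (∀ a x, (E a x).PosSemidef) ∧ ∀ x, ∑ a, E a x = 1

/-- A projective measurement family: a POVM family whose effects are orthogonal
projections. -/
def IsProjPOVM {ι A X : Type} [Fintype ι] [Fintype A] [DecidableEq ι]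
    (E : A → X → HMat ι) : Prop :=
  IsPOVM E ∧ ∀ a x, (E a x).IsHermitian ∧ E a x * E a x = E a x

/-- An assemblage `{σ_{a|x}}`: positive semidefinite matrices such that `∑_a σ_{a|x}`
is the same unit-trace matrix for every `x`. -/
def IsAssemblage {ι A X : Type} [Fintype ι] [Fintype A] (σ : A → X → HMat ι) : Prop :=
  (∀ a x, (σ a x).PosSemidef) ∧ (∀ x x', ∑ a, σ a x = ∑ a, σ a x') ∧
    ∀ x, (∑ a, σ a x).trace = 1

/-- An unsteerable assemblage: one admitting a local-hidden-state model. -/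
def IsUnsteerable {ι A X : Type} [Fintype ι] [Fintype A] (σ : A → X → HMat ι) : Prop :=
  ∃ (n : ℕ) (w : Fin n → ℝ) (p : A → X → Fin n → ℝ) (τ : Fin n → HMat ι),
    (∀ l, 0 ≤ w l) ∧ (∑ l, w l = 1) ∧
    (∀ a x l, 0 ≤ p a x l) ∧ (∀ x l, ∑ a, p a x l = 1) ∧
    (∀ l, IsDensity (τ l)) ∧
    ∀ a x, σ a x = ∑ l, (w l * p a x l) • τ l

/-- A steering functional `{F_{a|x}}`: a family of positive semidefinite matrices. -/
def IsSteeringFunctional {ι A X : Type} [Fintype ι] (F : A → X → HMat ι) : Prop :=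
  ∀ a x, (F a x).PosSemidef

/-- The value `∑_{a,x} tr(F_{a|x} σ_{a|x})` (real part). -/
def steeringValue {ι A X : Type} [Fintype ι] [Fintype A] [Fintype X]
    (F σ : A → X → HMat ι) : ℝ :=
  ∑ x, ∑ a, ((F a x * σ a x).trace).re

/-- The steering bound `ω_s(F)`. -/
def steeringBound {ι A X : Type} [Fintype ι] [Fintype A] [Fintype X]
    (F : A → X → HMat ι) : ℝ :=
  sSup {r : ℝ | ∃ σ : A → X → HMat ι, IsAssemblage σ ∧ IsUnsteerable σ ∧
    r = steeringValue F σ}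

/-- The steering fraction `Γ_s(σ, F)`. -/
def steeringFraction {ι A X : Type} [Fintype ι] [Fintype A] [Fintype X]
    (σ F : A → X → HMat ι) : ℝ :=
  steeringValue F σ / steeringBound F

/-- Partial trace over the first (Alice's) tensor factor. -/
def ptraceA {ιA ιB : Type} [Fintype ιA] (M : Matrix (ιA × ιB) (ιA × ιB) ℂ) : HMat ιB :=
  Matrix.of fun j j' => ∑ i, M (i, j) (i, j')

/-- The assemblage induced by a bipartite state and Alice's POVMs:
`σ_{a|x} = Tr_A[ρ (E_{a|x} ⊗ I)]`. -/
def inducedAssemblage {ιA ιB A X : Type} [Fintype ιA] [Fintype ιB] [DecidableEq ιB]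
    (ρ : Matrix (ιA × ιB) (ιA × ιB) ℂ) (E : A → X → HMat ιA) : A → X → HMat ιB :=
  fun a x => ptraceA (ρ * ((E a x) ⊗ₖ (1 : HMat ιB)))

/-- Largest steering-inequality violation `LV_s(ρ, F)` over Alice POVM families. -/
def LVs {ιA ιB A X : Type} [Fintype ιA] [Fintype ιB] [DecidableEq ιA] [DecidableEq ιB]
    [Fintype A] [Fintype X]
    (ρ : Matrix (ιA × ιB) (ιA × ιB) ℂ) (F : A → X → HMat ιB) : ℝ :=
  sSup {r : ℝ | ∃ E : A → X → HMat ιA, IsPOVM E ∧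
    r = steeringFraction (inducedAssemblage ρ E) F}

/-- Largest steering-inequality violation `LV_s^π(ρ, F)` over projective Alice families. -/
def LVsProj {ιA ιB A X : Type} [Fintype ιA] [Fintype ιB] [DecidableEq ιA] [DecidableEq ιB]
    [Fintype A] [Fintype X]
    (ρ : Matrix (ιA × ιB) (ιA × ιB) ℂ) (F : A → X → HMat ιB) : ℝ :=
  sSup {r : ℝ | ∃ E : A → X → HMat ιA, IsProjPOVM E ∧
    r = steeringFraction (inducedAssemblage ρ E) F}

/-- The maximally entangled state `|Ψ⁺⟩⟨Ψ⁺|` on `ℂ^ι ⊗ ℂ^ι`. -/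
def maxEnt (ι : Type) [Fintype ι] [DecidableEq ι] : Matrix (ι × ι) (ι × ι) ℂ :=
  Matrix.of fun pq rs => if pq.1 = pq.2 ∧ rs.1 = rs.2 then ((Fintype.card ι : ℂ))⁻¹ else 0

/-- The fully entangled fraction `F(ρ) = sup_U ⟨Ψ⁺|(U ⊗ I) ρ (U ⊗ I)†|Ψ⁺⟩`. -/
def fef {ι : Type} [Fintype ι] [DecidableEq ι] (ρ : Matrix (ι × ι) (ι × ι) ℂ) : ℝ :=
  sSup {r : ℝ | ∃ U : Matrix ι ι ℂ, U ∈ Matrix.unitaryGroup ι ℂ ∧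
    r = ((maxEnt ι * ((U ⊗ₖ (1 : HMat ι)) * ρ * ((U ⊗ₖ (1 : HMat ι))ᴴ))).trace).re}

/-- A local-hidden-variable (Bell-local) correlation. -/
def IsLHV {A B X Y : Type} [Fintype A] [Fintype B] (P : A → B → X → Y → ℝ) : Prop :=
  ∃ (n : ℕ) (w : Fin n → ℝ) (pA : A → X → Fin n → ℝ) (pB : B → Y → Fin n → ℝ),
    (∀ l, 0 ≤ w l) ∧ (∑ l, w l = 1) ∧
    (∀ a x l, 0 ≤ pA a x l) ∧ (∀ x l, ∑ a, pA a x l = 1) ∧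
    (∀ b y l, 0 ≤ pB b y l) ∧ (∀ y l, ∑ b, pB b y l = 1) ∧
    ∀ a b x y, P a b x y = ∑ l, w l * pA a x l * pB b y l

/-- The Bell value `∑ B_{ab|xy} P(a,b|x,y)`. -/
def bellValue {A B X Y : Type} [Fintype A] [Fintype B] [Fintype X] [Fintype Y]
    (Bf P : A → B → X → Y → ℝ) : ℝ :=
  ∑ x, ∑ y, ∑ a, ∑ b, Bf a b x y * P a b x y

/-- The local bound `ω(B)`. -/
def localBound {A B X Y : Type} [Fintype A] [Fintype B] [Fintype X] [Fintype Y]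
    (Bf : A → B → X → Y → ℝ) : ℝ :=
  sSup {r : ℝ | ∃ P : A → B → X → Y → ℝ, IsLHV P ∧ r = bellValue Bf P}

/-- The nonlocality fraction `Γ(P, B)`. -/
def nonlocalityFraction {A B X Y : Type} [Fintype A] [Fintype B] [Fintype X] [Fintype Y]
    (P Bf : A → B → X → Y → ℝ) : ℝ :=
  bellValue Bf P / localBound Bf

/-- The quantum correlation `P(a,b|x,y) = tr[ρ (E_{a|x} ⊗ E_{b|y})]`. -/
def quantumCorr {ιA ιB A B X Y : Type} [Fintype ιA] [Fintype ιB]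
    (ρ : Matrix (ιA × ιB) (ιA × ιB) ℂ) (EA : A → X → HMat ιA) (EB : B → Y → HMat ιB) :
    A → B → X → Y → ℝ :=
  fun a b x y => ((ρ * ((EA a x) ⊗ₖ (EB b y))).trace).re

/-- Largest Bell-inequality violation `LV(ρ, B)` over pairs of POVM families. -/
def LV {ιA ιB A B X Y : Type} [Fintype ιA] [Fintype ιB] [DecidableEq ιA] [DecidableEq ιB]
    [Fintype A] [Fintype B] [Fintype X] [Fintype Y]
    (ρ : Matrix (ιA × ιB) (ιA × ιB) ℂ) (Bf : A → B → X → Y → ℝ) : ℝ :=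
  sSup {r : ℝ | ∃ (EA : A → X → HMat ιA) (EB : B → Y → HMat ιB),
    IsPOVM EA ∧ IsPOVM EB ∧ r = nonlocalityFraction (quantumCorr ρ EA EB) Bf}

/-- Largest Bell-inequality violation `LV^π(ρ, B)` over pairs of projective families. -/
def LVProj {ιA ιB A B X Y : Type} [Fintype ιA] [Fintype ιB] [DecidableEq ιA] [DecidableEq ιB]
    [Fintype A] [Fintype B] [Fintype X] [Fintype Y]
    (ρ : Matrix (ιA × ιB) (ιA × ιB) ℂ) (Bf : A → B → X → Y → ℝ) : ℝ :=
  sSup {r : ℝ | ∃ (EA : A → X → HMat ιA) (EB : B → Y → HMat ιB),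
    IsProjPOVM EA ∧ IsProjPOVM EB ∧ r = nonlocalityFraction (quantumCorr ρ EA EB) Bf}

/-- The steering functional induced by a Bell functional and Bob's POVMs:
`F_{a|x} = ∑_{b,y} B_{ab|xy} E_{b|y}`. -/
def inducedF {ιB A B X Y : Type} [Fintype B] [Fintype Y]
    (Bf : A → B → X → Y → ℝ) (EB : B → Y → HMat ιB) : A → X → HMat ιB :=
  fun a x => ∑ y, ∑ b, Bf a b x y • EB b y

/-- The `k`-fold tensor power of a bipartite state, regrouped as a bipartite state on
`ℂ^{d^k} ⊗ ℂ^{d^k}` (Alice's factors grouped together, likewise Bob's). -/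
def tensorPower {ι : Type} (ρ : Matrix (ι × ι) (ι × ι) ℂ) (k : ℕ) :
    Matrix ((Fin k → ι) × (Fin k → ι)) ((Fin k → ι) × (Fin k → ι)) ℂ :=
  Matrix.of fun p q => ∏ t, ρ (p.1 t, p.2 t) (q.1 t, q.2 t)

/-- The isotropic state `ρ_iso(p) = p |Ψ⁺⟩⟨Ψ⁺| + (1-p) I/d²` on `ℂ^d ⊗ ℂ^d`. -/
def iso (d : ℕ) (p : ℝ) : Matrix (Fin d × Fin d) (Fin d × Fin d) ℂ :=
  p • maxEnt (Fin d) + ((1 - p) / (d : ℝ) ^ 2) • (1 : Matrix (Fin d × Fin d) (Fin d × Fin d) ℂ)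

/-- `sup_F Γ_s(σ, F)` over positive semidefinite steering functionals with positive
steering bound. -/
def supFrac {ι A X : Type} [Fintype ι] [Fintype A] [Fintype X] (σ : A → X → HMat ι) : ℝ :=
  sSup {r : ℝ | ∃ F : A → X → HMat ι, IsSteeringFunctional F ∧ 0 < steeringBound F ∧
    r = steeringFraction σ F}

/-- The optimal steering fraction `S_O(σ) = max{0, sup_F Γ_s(σ, F) − 1}`. -/
def SO {ι A X : Type} [Fintype ι] [Fintype A] [Fintype X] (σ : A → X → HMat ι) : ℝ :=
  max 0 (supFrac σ - 1)

/-- The steerable weight `S_W(σ)`. -/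
def SW {ι A X : Type} [Fintype ι] [Fintype A] [Fintype X] (σ : A → X → HMat ι) : ℝ :=
  sInf {ν : ℝ | 0 ≤ ν ∧ ν ≤ 1 ∧ ∃ σUS σS : A → X → HMat ι,
    IsAssemblage σUS ∧ IsUnsteerable σUS ∧ IsAssemblage σS ∧
    ∀ a x, σ a x = (1 - ν) • σUS a x + ν • σS a x}

/-- The steering robustness `S_R(σ)`. -/
def SR {ι A X : Type} [Fintype ι] [Fintype A] [Fintype X] (σ : A → X → HMat ι) : ℝ :=
  sInf {ν : ℝ | 0 ≤ ν ∧ ∃ τ : A → X → HMat ι, IsAssemblage τ ∧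
    IsUnsteerable (fun a x => (1 / (1 + ν)) • σ a x + (ν / (1 + ν)) • τ a x)}

/-- Separability of a bipartite state. -/
def IsSeparable {ιA ιB : Type} [Fintype ιA] [Fintype ιB]
    (ρ : Matrix (ιA × ιB) (ιA × ιB) ℂ) : Prop :=
  ∃ (n : ℕ) (w : Fin n → ℝ) (ρA : Fin n → HMat ιA) (ρB : Fin n → HMat ιB),
    (∀ l, 0 ≤ w l) ∧ (∑ l, w l = 1) ∧ (∀ l, IsDensity (ρA l)) ∧ (∀ l, IsDensity (ρB l)) ∧
    ρ = ∑ l, w l • ((ρA l) ⊗ₖ (ρB l))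

/-- The (unnormalized) output assemblage of a one-way LOCC subchannel acting on an
assemblage: `M(σ)_{a'|x'} = K (∑_{a,x} P(x|x') P(a'|x',a,x) σ_{a|x}) K†`. -/
def wired {ι ι₂ A X A' X' : Type} [Fintype ι] [Fintype A] [Fintype X]
    (K : Matrix ι₂ ι ℂ) (Px : X → X' → ℝ) (Pa : A' → X' → A → X → ℝ)
    (σ : A → X → HMat ι) : A' → X' → HMat ι₂ :=
  fun a' x' => K * (∑ x, ∑ a, (Px x x' * Pa a' x' a x) • σ a x) * Kᴴ

instance matMeasurableSpace {m n : Type} : MeasurableSpace (Matrix m n ℂ) :=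
  inferInstanceAs (MeasurableSpace (m → n → ℂ))

/-- The `(U ⊗ U*)`-twirl of a bipartite state with respect to a measure `μ` on the
unitary group (entrywise Bochner integral). -/
def twirl {ι : Type} [Fintype ι] [DecidableEq ι]
    (μ : Measure (Matrix.unitaryGroup ι ℂ)) (ρ : Matrix (ι × ι) (ι × ι) ℂ) :
    Matrix (ι × ι) (ι × ι) ℂ :=
  Matrix.of fun p q =>
    ∫ V : Matrix.unitaryGroup ι ℂ,
      ((((V : Matrix ι ι ℂ)) ⊗ₖ ((V : Matrix ι ι ℂ).map (starRingEnd ℂ))) * ρ *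
        ((((V : Matrix ι ι ℂ)) ⊗ₖ ((V : Matrix ι ι ℂ).map (starRingEnd ℂ)))ᴴ)) p q ∂μ

/-!
For every steering functional `F` with `ω_s(F) > 0`, unsteerability of the mixture gives
`⟨F, σ⟩ / (1 + S_R) + S_R ⟨F, σ̃⟩ / (1 + S_R) ≤ ω_s(F)`, and both terms are nonnegative.
Bounding each term alone yields `S_O(σ) ≤ S_R(σ)` and `S_R(σ) · S_O(σ̃) ≤ 1`, which imply
both inequalities.
-/

theorem _root_.Matrix.PosSemidef.trace_mul_nonneg {n 𝕜 : Type*} [Fintype n] [RCLike 𝕜]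
    {M N : Matrix n n 𝕜} (hM : M.PosSemidef) (hN : N.PosSemidef) : 0 ≤ (M * N).trace := by
  classical
  obtain ⟨B, rfl⟩ : ∃ B : Matrix n n 𝕜, M = Bᴴ * B := by
    open scoped MatrixOrder Matrix.Norms.L2Operator in
    exact CStarAlgebra.nonneg_iff_eq_star_mul_self.mp hM.nonneg
  rw [Matrix.mul_assoc, Matrix.trace_mul_comm]
  exact (hN.mul_mul_conjTranspose_same B).trace_nonneg

section Steering

variable {ι A X : Type} [Fintype ι] [Fintype A]

theorem IsUnsteerable.isAssemblage {σ : A → X → HMat ι} (h : IsUnsteerable σ) :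
    IsAssemblage σ := by
  obtain ⟨n, w, p, ρ, hw, hw1, hp, hp1, hρ, hσ⟩ := h
  obtain rfl : σ = fun a x => ∑ l, (w l * p a x l) • ρ l := funext₂ hσ
  have hmarginal : ∀ x, ∑ a, ∑ l, (w l * p a x l) • ρ l = ∑ l, w l • ρ l := fun x => by
    rw [Finset.sum_comm]
    refine Finset.sum_congr rfl fun l _ => ?_
    rw [← Finset.sum_smul, ← Finset.mul_sum, hp1, mul_one]
  refine ⟨fun a x => Matrix.posSemidef_sum _ fun l _ =>
      (hρ l).1.smul (mul_nonneg (hw l) (hp a x l)), fun x x' => ?_, fun x => ?_⟩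
  · rw [hmarginal, hmarginal]
  · simp only [hmarginal, Matrix.trace_sum, Matrix.trace_smul, (hρ _).2, Complex.real_smul,
      mul_one]
    exact_mod_cast hw1

variable [Fintype X]

theorem steeringValue_nonneg {F σ : A → X → HMat ι} (hF : IsSteeringFunctional F)
    (hσ : ∀ a x, (σ a x).PosSemidef) : 0 ≤ steeringValue F σ :=
  Finset.sum_nonneg fun x _ => Finset.sum_nonneg fun a _ =>
    (Complex.nonneg_iff.mp ((hF a x).trace_mul_nonneg (hσ a x))).1

theorem steeringValue_smul_add_smul (F σ τ : A → X → HMat ι) (c d : ℝ) :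
    steeringValue F (fun a x => c • σ a x + d • τ a x) =
      c * steeringValue F σ + d * steeringValue F τ := by
  simp only [steeringValue, mul_add, Matrix.mul_smul, Matrix.trace_add, Matrix.trace_smul,
    Complex.add_re, Complex.smul_re, smul_eq_mul, Finset.sum_add_distrib, Finset.mul_sum]

theorem steeringValue_le_steeringBound {F σ : A → X → HMat ι} (hF : 0 < steeringBound F)
    (hσ : IsUnsteerable σ) : steeringValue F σ ≤ steeringBound F := by
  refine le_csSup ?_ ⟨σ, hσ.isAssemblage, hσ, rfl⟩
  -- an unbounded set would have the junk supremum `0`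
  by_contra hunb
  rw [steeringBound, Real.sSup_of_not_bddAbove hunb] at hF
  exact hF.false

theorem supFrac_le_inv_of_isUnsteerable {σ τ : A → X → HMat ι} {c d : ℝ} (hc : 0 < c)
    (hd : 0 ≤ d) (hτ : ∀ a x, (τ a x).PosSemidef)
    (h : IsUnsteerable fun a x => c • σ a x + d • τ a x) : supFrac σ ≤ c⁻¹ := by
  refine Real.sSup_le ?_ (inv_nonneg.mpr hc.le)
  rintro _ ⟨F, hF, hω, rfl⟩
  rw [steeringFraction, div_le_iff₀ hω, ← div_eq_inv_mul, le_div_iff₀' hc]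
  calc c * steeringValue F σ
      ≤ c * steeringValue F σ + d * steeringValue F τ :=
        le_add_of_nonneg_right (mul_nonneg hd (steeringValue_nonneg hF hτ))
    _ = steeringValue F (fun a x => c • σ a x + d • τ a x) :=
        (steeringValue_smul_add_smul F σ τ c d).symm
    _ ≤ steeringBound F := steeringValue_le_steeringBound hω h

theorem SO_nonneg (σ : A → X → HMat ι) : 0 ≤ SO σ :=
  le_max_left _ _

theorem SO_le_of_supFrac_le {σ : A → X → HMat ι} {t : ℝ} (ht : 0 ≤ t)
    (h : supFrac σ ≤ 1 + t) : SO σ ≤ t :=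
  max_le ht (by linarith)

end Steering

/-- Proposition 2: for an assemblage `σ̃` achieving the steering
robustness of `σ` (i.e. the corresponding mixture is unsteerable),
`S_R(σ)·S_O(σ̃) − 2 ≤ S_O(σ) ≤ S_R(σ)·[S_O(σ̃) + 2]`. -/
theorem stmt14 {ι A X : Type} [Fintype ι] [Fintype A] [Fintype X]
    (σ τ : A → X → HMat ι) (hσ : IsAssemblage σ) (hτ : IsAssemblage τ)
    (hmix : IsUnsteerable
      (fun a x => (1 / (1 + SR σ)) • σ a x + (SR σ / (1 + SR σ)) • τ a x)) :
    SR σ * SO τ - 2 ≤ SO σ ∧ SO σ ≤ SR σ * (SO τ + 2) := by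
  set r := SR σ
  have hr : 0 ≤ r := Real.sInf_nonneg fun _ hν => hν.1
  have hSOσ : SO σ ≤ r := by
    refine SO_le_of_supFrac_le hr ?_
    simpa [add_comm] using supFrac_le_inv_of_isUnsteerable (by positivity) (by positivity)
      hτ.1 hmix
  have hSOτ : r * SO τ ≤ 1 := by
    rcases hr.eq_or_lt with hr0 | hrpos
    · simp [← hr0]
    · have hmix' : IsUnsteerable fun a x => (r / (1 + r)) • τ a x + (1 / (1 + r)) • σ a x := by
        simpa only [add_comm] using hmix
      have hsup := supFrac_le_inv_of_isUnsteerable (by positivity) (by positivity) hσ.1 hmix'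
      rw [inv_div, add_div, div_self hrpos.ne', one_div, add_comm r⁻¹] at hsup
      calc r * SO τ ≤ r * r⁻¹ :=
            mul_le_mul_of_nonneg_left (SO_le_of_supFrac_le (by positivity) hsup) hr
        _ = 1 := mul_inv_cancel₀ hrpos.ne'
  exact ⟨by linarith [SO_nonneg σ], by nlinarith [SO_nonneg τ]⟩

end QSteer

end
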